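/- arXiv:2209.04667 — 2 statements merged into one kernel-verified Lean document; each statement's English description precedes it below -/
import Mathlib

section
/- (Kieninger criterion) Let X be a Polish space, (X; f_i : i ∈ I) an IFS with Hutchinson operator F, and A* ⊆ X a compact set which is a semiattractor, i.e., ⋂_{x∈X} Li Fⁿ({x}) = A*. For a sequence (iₙ) ∈ I^∞ define the fibre π(i₁i₂…) = ⋂_{n≥1} f_{i₁}∘…∘f_{iₙ}(A*). Suppose some fibre is a singleton: there exist (iₙ) ∈ I^∞ and a* ∈ A* with π(i₁i₂…) = {a*}. Then A* is strongly-fibred: for every a ∈ A* and every open set V containing a, there exists (jₙ) ∈ I^∞ such that π(j₁j₂…) ⊆ V. -/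
open Filter Topology Set

/-- Lower Kuratowski limit of a sequence of sets. -/
def Li {X : Type*} [MetricSpace X] (S : ℕ → Set X) : Set X :=
  {y | ∃ u : ℕ → X, (∀ n, u n ∈ S n) ∧ Tendsto u atTop (𝓝 y)}

/-- Hutchinson operator of the IFS `(X; f_i : i ∈ I)`. -/
def hutch {X : Type*} [TopologicalSpace X] {I : Type*} (f : I → X → X) (S : Set X) : Set X :=
  closure (⋃ i, f i '' S)

/-- Composition `f_{i₁} ∘ … ∘ f_{i_k}` along a list of indices. -/
def seqComp {X I : Type*} (f : I → X → X) : List I → (X → X)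
  | [] => id
  | i :: t => f i ∘ seqComp f t

/-- The fibre of the set `A` with address `i = (i₁ i₂ …)`:
`π(i₁i₂…) = ⋂_{n ≥ 1} f_{i₁}∘…∘f_{iₙ}(A)`. -/
def fibre {X I : Type*} (f : I → X → X) (A : Set X) (i : ℕ → I) : Set X :=
  ⋂ n : ℕ, seqComp f (List.ofFn fun m : Fin (n + 1) => i m) '' A

/-!
Pick a singleton fibre `π(i) = {a*}`. Since `a` lies in the lower limit of `Fⁿ{a*}`, some
finite word `w` sends `a*` into `V`. The approximations `f_{i₁…iₙ}(A)` of `π(i)` form a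
decreasing sequence of compact sets shrinking to `a*`, so one of them lies in the open
neighbourhood `f_w⁻¹(V)` of `a*`. Hence the fibre of the address `w i₁ i₂ …` lies in `V`.
-/

section seqComp

variable {X I : Type*} {f : I → X → X}

lemma seqComp_append (l₁ l₂ : List I) : seqComp f (l₁ ++ l₂) = seqComp f l₁ ∘ seqComp f l₂ := by
  induction l₁ with
  | nil => rfl
  | cons i t ih => simp only [List.cons_append, seqComp, ih, Function.comp_assoc]

lemma continuous_seqComp [TopologicalSpace X] (hf : ∀ i, Continuous (f i))
    (l : List I) : Continuous (seqComp f l) := by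
  induction l with
  | nil => exact continuous_id
  | cons i t ih => exact (hf i).comp ih

end seqComp

lemma List.ofFn_eq_take {α : Type*} (s : Stream' α) (n : ℕ) :
    List.ofFn (fun m : Fin n => s m) = s.take n :=
  List.ext_getElem (by simp) fun _ _ _ => by simp [Stream'.get]

section fibre

variable {X I : Type*} {f : I → X → X} {A : Set X}

lemma fibre_eq_iInter_take (s : Stream' I) :
    fibre f A s = ⋂ n, seqComp f (s.take (n + 1)) '' A := by
  simp only [fibre, List.ofFn_eq_take]

lemma antitone_seqComp_take_image (hAf : ∀ i, MapsTo (f i) A A) (s : Stream' I) :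
    Antitone fun n => seqComp f (s.take n) '' A := by
  refine antitone_nat_of_succ_le fun n => ?_
  simp only [Stream'.take_succ', seqComp_append, image_comp]
  exact image_mono (hAf _).image_subset

lemma fibre_append_subset (w : List I) (s : Stream' I) (n : ℕ) :
    fibre f A (w ++ₛ s) ⊆ seqComp f w '' (seqComp f (s.take (n + 1)) '' A) := by
  rw [fibre_eq_iInter_take, ← image_comp, ← seqComp_append, Stream'.append_take]
  exact iInter_subset (fun n => seqComp f ((w ++ₛ s).take (n + 1)) '' A) (w.length + n)

lemma exists_take_image_subset_of_fibre_eq_singleton [TopologicalSpace X] [T2Space X]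
    (hf : ∀ i, Continuous (f i)) (hA : IsCompact A) (hAf : ∀ i, MapsTo (f i) A A)
    {s : Stream' I} {a : X} (hs : fibre f A s = {a}) {U : Set X} (hU : IsOpen U) (haU : a ∈ U) :
    ∃ n, seqComp f (s.take (n + 1)) '' A ⊆ U := by
  have hcompact (n : ℕ) : IsCompact (seqComp f (s.take (n + 1)) '' A) :=
    hA.image (continuous_seqComp hf _)
  have hdir : Directed (· ⊇ ·) fun n => seqComp f (s.take (n + 1)) '' A :=
    ((antitone_seqComp_take_image hAf s).comp_monotone
      (fun _ _ h => Nat.succ_le_succ h)).directed_ge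
  refine exists_subset_nhds_of_isCompact' hdir hcompact (fun n => (hcompact n).isClosed) ?_
  rw [← fibre_eq_iInter_take, hs]
  rintro _ rfl
  exact hU.mem_nhds haU

end fibre

section hutch

variable {X I : Type*} {f : I → X → X}

lemma exists_seqComp_mem_of_inter_iterate_hutch [TopologicalSpace X]
    (hf : ∀ i, Continuous (f i)) (x : X) (n : ℕ) {V : Set X} (hV : IsOpen V)
    (h : (V ∩ (hutch f)^[n] {x}).Nonempty) : ∃ w, seqComp f w x ∈ V := by
  induction n generalizing V with
  | zero => exact ⟨[], by simpa [seqComp] using h⟩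
  | succ n ih =>
    rw [Function.iterate_succ_apply', hutch, inter_comm, closure_inter_open_nonempty_iff hV,
      iUnion_inter, nonempty_iUnion] at h
    obtain ⟨i, y, ⟨z, hz, rfl⟩, hzV⟩ := h
    obtain ⟨w, hw⟩ := ih (hV.preimage (hf i)) ⟨z, hzV, hz⟩
    exact ⟨i :: w, hw⟩

lemma mapsTo_of_semiattractor [MetricSpace X] (hf : ∀ i, Continuous (f i)) {A : Set X}
    (hsemi : ⋂ x : X, Li (fun n => (hutch f)^[n] {x}) = A) (j : I) : MapsTo (f j) A A := by
  intro a ha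
  rw [← hsemi, mem_iInter] at ha ⊢
  intro x
  obtain ⟨u, hu, hconv⟩ := ha x
  -- the shifted sequence `x, f j (u 0), f j (u 1), …` stays in `Fⁿ{x}`
  refine ⟨fun n => Nat.casesOn n x fun n => f j (u n), fun n => ?_, ?_⟩
  · cases n with
    | zero => exact rfl
    | succ n =>
      change f j (u n) ∈ (hutch f)^[n + 1] {x}
      rw [Function.iterate_succ_apply']
      exact subset_closure (mem_iUnion.2 ⟨j, mem_image_of_mem _ (hu n)⟩)
  · exact (tendsto_add_atTop_iff_nat 1).mp (((hf j).tendsto a).comp hconv)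

end hutch

theorem stronglyFibred_of_singleton_fibre_general
    {X : Type*} [MetricSpace X]
    {I : Type*}
    (f : I → X → X) (hf : ∀ i, Continuous (f i))
    (A : Set X) (hA : IsCompact A)
    (hsemi : ⋂ x : X, Li (fun n => (hutch f)^[n] {x}) = A)
    (hfib : ∃ (i : ℕ → I) (a : X), a ∈ A ∧ fibre f A i = {a}) :
    ∀ a ∈ A, ∀ V : Set X, IsOpen V → a ∈ V →
      ∃ j : ℕ → I, fibre f A j ⊆ V := by
  intro a ha V hV haV
  obtain ⟨i, astar, -, hi⟩ := hfib
  obtain ⟨u, hu, hconv⟩ : a ∈ Li (fun n => (hutch f)^[n] {astar}) :=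
    mem_iInter.mp (hsemi ▸ ha) astar
  obtain ⟨n, hn⟩ := (hconv.eventually_mem (hV.mem_nhds haV)).exists
  obtain ⟨w, hw⟩ := exists_seqComp_mem_of_inter_iterate_hutch hf astar n hV ⟨u n, hn, hu n⟩
  obtain ⟨m, hm⟩ := exists_take_image_subset_of_fibre_eq_singleton hf hA
    (mapsTo_of_semiattractor hf hsemi) hi (hV.preimage (continuous_seqComp hf w)) hw
  exact ⟨w ++ₛ i, (fibre_append_subset w i m).trans (image_subset_iff.mpr hm)⟩

/-- The Kieninger criterion: a compact semiattractor admitting a singleton fibre is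
strongly-fibred. -/
theorem stronglyFibred_of_singleton_fibre
    {X : Type*} [MetricSpace X] [CompleteSpace X] [TopologicalSpace.SeparableSpace X]
    {I : Type*} [Fintype I] [Nonempty I]
    (f : I → X → X) (hf : ∀ i, Continuous (f i))
    (A : Set X) (hA : IsCompact A) (hne : A.Nonempty)
    (hsemi : ⋂ x : X, Li (fun n => (hutch f)^[n] {x}) = A)
    (hfib : ∃ (i : ℕ → I) (a : X), a ∈ A ∧ fibre f A i = {a}) :
    ∀ a ∈ A, ∀ V : Set X, IsOpen V → a ∈ V →
      ∃ j : ℕ → I, fibre f A j ⊆ V :=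
  stronglyFibred_of_singleton_fibre_general f hf A hA hsemi hfib
end

section
/- Let Δ ⊆ ℝ² be the convex hull of (0,0), (1,0), (0,1) and f₁(x,y) = (x + y/2, y/2). Then the fibre with constant address 1 is a segment: ⋂_{n≥1} f₁ⁿ(Δ) = [0,1] × {0}. In particular this fibre is not a singleton. -/
open Set

/-- The Barnsley–Vince map `f₁(x,y) = (x + y/2, y/2)`. -/
noncomputable def f1 : ℝ × ℝ → ℝ × ℝ := fun v => (v.1 + v.2 / 2, v.2 / 2)

/-- The filled triangle with vertices `(0,0)`, `(1,0)`, `(0,1)`. -/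
def Δ : Set (ℝ × ℝ) := convexHull ℝ {(0, 0), (1, 0), (0, 1)}

open Filter Function

/-! `f₁` preserves `x + y` and `x ≥ 0` while halving `y`, so it maps `Δ` into itself and
`f₁ⁿ(Δ)` lies in `Δ ∩ {y ≤ 2⁻ⁿ}`; these sets shrink to the bottom edge of `Δ`. Conversely
`f₁` fixes every point of that edge, so the edge lies in every `f₁ⁿ(Δ)`. -/

lemma mem_Δ_iff {p : ℝ × ℝ} : p ∈ Δ ↔ 0 ≤ p.1 ∧ 0 ≤ p.2 ∧ p.1 + p.2 ≤ 1 := by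
  constructor
  · refine fun hp =>
      (convexHull_min ?_ ?_ : Δ ⊆ {q | 0 ≤ q.1 ∧ 0 ≤ q.2 ∧ q.1 + q.2 ≤ 1}) hp
    · rintro q (rfl | rfl | rfl) <;> norm_num
    · rintro q ⟨hq₁, hq₂, hq⟩ r ⟨hr₁, hr₂, hr⟩ a b ha hb hab
      simp only [mem_ofPred_eq, Prod.fst_add, Prod.snd_add, Prod.smul_fst, Prod.smul_snd,
        smul_eq_mul]
      refine ⟨by positivity, by positivity, ?_⟩
      nlinarith
  · rintro ⟨h₁, h₂, h⟩
    let w : Fin 3 → ℝ := ![1 - p.1 - p.2, p.1, p.2]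
    let z : Fin 3 → ℝ × ℝ := ![(0, 0), (1, 0), (0, 1)]
    have hp : ∑ i, w i • z i = p := by ext <;> simp [w, z, Fin.sum_univ_three]
    rw [← hp]
    refine (convex_convexHull ℝ _).sum_mem (fun i _ => ?_) ?_ fun i _ => ?_
    · fin_cases i <;> simp [w] <;> linarith
    · simp only [w, Fin.sum_univ_three, Matrix.cons_val]
      ring
    · exact subset_convexHull ℝ _ (by fin_cases i <;> simp [z])

lemma mapsTo_f1_Δ : MapsTo f1 Δ Δ := by
  intro v hv
  rw [mem_Δ_iff] at hv ⊢
  simp only [f1]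
  exact ⟨by linarith, by linarith, by linarith⟩

lemma snd_iterate_f1 (n : ℕ) (v : ℝ × ℝ) : (f1^[n] v).2 = v.2 / 2 ^ n := by
  induction n with
  | zero => simp
  | succ n ih => rw [iterate_succ_apply', f1, ih, pow_succ, div_div]

lemma isFixedPt_f1 {v : ℝ × ℝ} (hv : v.2 = 0) : IsFixedPt f1 v := by
  ext <;> simp [f1, hv]

lemma iInter_iterate_image_f1_Δ :
    (⋂ n ∈ Ici 1, f1^[n] '' Δ) = Icc (0 : ℝ) 1 ×ˢ ({0} : Set ℝ) := by
  ext p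
  simp only [mem_iInter, mem_Ici, mem_prod, mem_Icc, mem_singleton_iff]
  constructor
  · intro hp
    have hpΔ : p ∈ Δ := by
      obtain ⟨v, hv, rfl⟩ := hp 1 le_rfl
      exact mapsTo_f1_Δ.iterate 1 hv
    have hp₂ : p.2 ≤ 0 := by
      refine ge_of_tendsto (tendsto_pow_atTop_nhds_zero_of_lt_one (r := (1 / 2 : ℝ))
        (by norm_num) (by norm_num)) (eventually_atTop.2 ⟨1, fun n hn => ?_⟩)
      obtain ⟨v, hv, rfl⟩ := hp n hn
      rw [snd_iterate_f1, one_div_pow]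
      obtain ⟨hv₁, -, hsum⟩ := mem_Δ_iff.1 hv
      gcongr
      linarith
    obtain ⟨h₁, h₂, h⟩ := mem_Δ_iff.1 hpΔ
    exact ⟨⟨h₁, by linarith⟩, by linarith⟩
  · rintro ⟨⟨h₁, h⟩, h₂⟩ n -
    exact ⟨p, mem_Δ_iff.2 ⟨h₁, h₂.ge, by linarith⟩, ((isFixedPt_f1 h₂).iterate n).eq⟩

/-- The fibre with constant address `1` is the segment `[0,1] × {0}`; in particular it is
not a singleton. -/
theorem fibre_constant_one :
    (⋂ n ∈ Set.Ici 1, f1^[n] '' Δ) = Set.Icc (0 : ℝ) 1 ×ˢ ({0} : Set ℝ) ∧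
    ¬ ∃ a : ℝ × ℝ, (⋂ n ∈ Set.Ici 1, f1^[n] '' Δ) = {a} := by
  have hseg : (Icc (0 : ℝ) 1 ×ˢ ({0} : Set ℝ)).Nontrivial :=
    ⟨(0, 0), by simp, (1, 0), by simp, by simp⟩
  rw [iInter_iterate_image_f1_Δ]
  exact ⟨rfl, fun ⟨_, ha⟩ => hseg.ne_singleton ha⟩
end
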